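/- Let C > 0, let T > 0, and let y : [0,T] → ℝ be continuously differentiable with y(t) > 0 for all t and y'(t) ≤ C(y(t) + y(t)²) for all t ∈ [0,T]. Set y₀ = y(0) and T̃ = (1/(2C))·ln(1 + 1/y₀). Then for every t ∈ [0, min(T, T̃)], y(t) ≤ 1/(e^{−Ct}(y₀^{−1} + 1) − 1), and in particular y(t) ≤ 2 e^{C T̃} y₀. -/

import Mathlib

open MeasureTheory Filter

noncomputable section

/-- Fourier transform with symmetric normalization `f̂(ξ) = (2π)^{-1/2} ∫ e^{-ixξ} f(x) dx`. -/
def FT (f : ℝ → ℂ) (ξ : ℝ) : ℂ :=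
  ((Real.sqrt (2 * Real.pi) : ℝ) : ℂ)⁻¹ * ∫ x : ℝ, Complex.exp (-(Complex.I * (x : ℂ) * (ξ : ℂ))) * f x

/-- Inverse Fourier transform. -/
def FTinv (f : ℝ → ℂ) (x : ℝ) : ℂ :=
  ((Real.sqrt (2 * Real.pi) : ℝ) : ℂ)⁻¹ * ∫ ξ : ℝ, Complex.exp (Complex.I * (x : ℂ) * (ξ : ℂ)) * f ξ

/-- Sobolev `H^s` norm: `(∫ (1+ξ²)^s |f̂(ξ)|² dξ)^{1/2}`. -/
def HsNorm (s : ℝ) (f : ℝ → ℂ) : ℝ :=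
  (∫ ξ : ℝ, (1 + ξ ^ 2) ^ s * ‖FT f ξ‖ ^ 2) ^ (1/2 : ℝ)

/-- Sobolev `H^s` norm of a real-valued function. -/
def HsNormR (s : ℝ) (f : ℝ → ℝ) : ℝ := HsNorm s (fun x => (f x : ℂ))

def L2NormC (f : ℝ → ℂ) : ℝ := (∫ x : ℝ, ‖f x‖ ^ 2) ^ (1/2 : ℝ)

def L2Norm (f : ℝ → ℝ) : ℝ := (∫ x : ℝ, (f x) ^ 2) ^ (1/2 : ℝ)

def L1Norm (f : ℝ → ℝ) : ℝ := ∫ x : ℝ, |f x|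

def LinfNorm (f : ℝ → ℝ) : ℝ := ⨆ x : ℝ, |f x|

def LinfNormC (f : ℝ → ℂ) : ℝ := ⨆ x : ℝ, ‖f x‖

/-- The nonlocal operator `∂ₓΛ⁻²` given by convolution with `-(1/2) sgn(x) e^{-|x|}`. -/
def DxLm2 (w : ℝ → ℝ) (x : ℝ) : ℝ :=
  -(1/2) * ∫ y : ℝ, Real.sign (x - y) * Real.exp (-|x - y|) * w y

/-- `(u, η)` solves the two-component Fornberg–Whitham system
`uₜ + u uₓ = ∂ₓΛ⁻²(η - u)`, `ηₜ + (η u)ₓ = 0` for times in `S`. -/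
def IsFWSolutionOn (S : Set ℝ) (u η : ℝ → ℝ → ℝ) : Prop :=
  ∀ t ∈ S, ∀ x : ℝ,
    HasDerivAt (fun τ => u τ x)
      (-(u t x * deriv (fun y => u t y) x) + DxLm2 (fun y => η t y - u t y) x) t ∧
    HasDerivAt (fun τ => η τ x) (-(deriv (fun y => η t y * u t y) x)) t

/-- Continuity in time with values in `H^s`. -/
def ContInHs (S : Set ℝ) (s : ℝ) (u : ℝ → ℝ → ℝ) : Prop :=
  ∀ t₀ ∈ S, Tendsto (fun t => HsNormR s (fun x => u t x - u t₀ x)) (nhdsWithin t₀ S) (nhds 0)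

/-- The approximate solutions `u^{α,n}`. -/
def uapp (φ ψ : ℝ → ℝ) (s δ α : ℝ) (n : ℕ) (t x : ℝ) : ℝ :=
  (α / n) * ψ (x / (n : ℝ) ^ δ)
    + (n : ℝ) ^ (-s - δ/2) * φ (x / (n : ℝ) ^ δ) * Real.cos (n * x - α * t)

/-- The approximate solutions `η^{α,n}`. -/
def etaapp (ψ : ℝ → ℝ) (δ α : ℝ) (n : ℕ) (_t x : ℝ) : ℝ :=
  (α / n) * ψ (x / (n : ℝ) ^ δ)

/-- The error `E = ∂ₜu^{α,n} + u^{α,n}∂ₓu^{α,n} - ∂ₓΛ⁻²(η^{α,n} - u^{α,n})`. -/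
def Eerr (φ ψ : ℝ → ℝ) (s δ α : ℝ) (n : ℕ) (t x : ℝ) : ℝ :=
  deriv (fun τ => uapp φ ψ s δ α n τ x) t
    + uapp φ ψ s δ α n t x * deriv (fun y => uapp φ ψ s δ α n t y) x
    - DxLm2 (fun y => etaapp ψ δ α n t y - uapp φ ψ s δ α n t y) x

/-- The error `F = ∂ₜη^{α,n} + ∂ₓ(η^{α,n} u^{α,n})`. -/
def Ferr (φ ψ : ℝ → ℝ) (s δ α : ℝ) (n : ℕ) (t x : ℝ) : ℝ :=
  deriv (fun τ => etaapp ψ δ α n τ x) t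
    + deriv (fun y => etaapp ψ δ α n t y * uapp φ ψ s δ α n t y) x

/-!
With `z = 1/y + 1` the inequality `y' ≤ C(y + y²)` reads `z' ≥ -C z`, so `e^{Ct} z(t)` is
nondecreasing and `z(t) ≥ e^{-Ct} z(0)`; this inverts to the first bound while `e^{-Ct} z(0) > 1`.
For `t ≤ T̃` one has `e^{-Ct} z(0) ≥ e^{-CT̃} z(0) = B` with `B = e^{CT̃} = √z(0) > 1`, and
`1/(B - 1) = y₀(B + 1) ≤ 2 B y₀`.
-/

open Real Set

theorem monotoneOn_exp_mul_of_neg_mul_le_deriv {s : Set ℝ} (hs : Convex ℝ s) {C : ℝ}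
    {z z' : ℝ → ℝ} (hz : ∀ t ∈ s, HasDerivAt z (z' t) t) (hz' : ∀ t ∈ s, -C * z t ≤ z' t) :
    MonotoneOn (fun t => exp (C * t) * z t) s := by
  have hderiv : ∀ t ∈ s, HasDerivAt (fun t => exp (C * t) * z t)
      (exp (C * t) * (z' t + C * z t)) t := fun t ht => by
    have hexp : HasDerivAt (fun t => exp (C * t)) (exp (C * t) * C) t := by
      simpa using ((hasDerivAt_id t).const_mul C).exp
    exact (hexp.mul (hz t ht)).congr_deriv (by ring)
  refine monotoneOn_of_hasDerivWithinAt_nonneg hs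
    (fun t ht => (hderiv t ht).continuousAt.continuousWithinAt)
    (fun t ht => (hderiv t (interior_subset ht)).hasDerivWithinAt) fun t ht => ?_
  have := hz' t (interior_subset ht)
  exact mul_nonneg (exp_pos _).le (by linarith)

theorem neg_mul_inv_add_one_le_neg_div_sq {C y y' : ℝ} (hy : 0 < y)
    (h : y' ≤ C * (y + y ^ 2)) : -C * (y⁻¹ + 1) ≤ -y' / y ^ 2 := by
  rw [le_div_iff₀ (by positivity)]
  have : -C * (y⁻¹ + 1) * y ^ 2 = -C * (y + y ^ 2) := by field_simp
  linarith

theorem monotoneOn_exp_mul_inv_add_one {s : Set ℝ} (hs : Convex ℝ s) {C : ℝ} {y y' : ℝ → ℝ}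
    (hderiv : ∀ t ∈ s, HasDerivAt y (y' t) t) (hpos : ∀ t ∈ s, 0 < y t)
    (hineq : ∀ t ∈ s, y' t ≤ C * (y t + y t ^ 2)) :
    MonotoneOn (fun t => exp (C * t) * ((y t)⁻¹ + 1)) s :=
  monotoneOn_exp_mul_of_neg_mul_le_deriv hs
    (fun t ht => ((hderiv t ht).inv (hpos t ht).ne').add_const 1)
    fun t ht => neg_mul_inv_add_one_le_neg_div_sq (hpos t ht) (hineq t ht)

theorem one_div_sub_one_le_two_mul_mul {x b : ℝ} (hx : 0 < x) (hb : 0 < b)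
    (hb2 : b ^ 2 = 1 + x⁻¹) : 1 / (b - 1) ≤ 2 * b * x := by
  have hb1 : 1 < b := by nlinarith [inv_pos.2 hx]
  have : 1 / (b - 1) = x * (b + 1) := by
    rw [div_eq_iff (by linarith)]
    field_simp at hb2
    nlinarith
  rw [this]
  nlinarith

theorem exp_mul_one_div_two_mul_log_sq {C a : ℝ} (hC : C ≠ 0) (ha : 0 < a) :
    exp (C * (1 / (2 * C) * log a)) ^ 2 = a := by
  conv_rhs => rw [← exp_log ha]
  rw [← exp_nat_mul]
  congr 1
  push_cast
  field_simp

theorem riccati_comparison_general (C T : ℝ) (hC : 0 < C) (y y' : ℝ → ℝ)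
    (hderiv : ∀ t ∈ Set.Icc (0 : ℝ) T, HasDerivAt y (y' t) t)
    (hpos : ∀ t ∈ Set.Icc (0 : ℝ) T, 0 < y t)
    (hineq : ∀ t ∈ Set.Icc (0 : ℝ) T, y' t ≤ C * (y t + (y t) ^ 2)) :
    ∀ t ∈ Set.Icc (0 : ℝ) (min T ((1 / (2 * C)) * Real.log (1 + 1 / y 0))),
      y t ≤ 1 / (Real.exp (-C * t) * ((y 0)⁻¹ + 1) - 1) ∧
      y t ≤ 2 * Real.exp (C * ((1 / (2 * C)) * Real.log (1 + 1 / y 0))) * y 0 := by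
  rintro t ⟨ht0, htmin⟩
  set τ := 1 / (2 * C) * log (1 + 1 / y 0)
  have htT : t ∈ Icc 0 T := ⟨ht0, htmin.trans (min_le_left _ _)⟩
  have h0T : (0 : ℝ) ∈ Icc 0 T := ⟨le_rfl, ht0.trans htT.2⟩
  have hy0 := hpos 0 h0T
  have hyt := hpos t htT
  set B := exp (C * τ)
  have hB : B ^ 2 = 1 + (y 0)⁻¹ := by
    rw [← one_div]
    exact exp_mul_one_div_two_mul_log_sq hC.ne' (by positivity)
  have hB1 : 1 < B := by nlinarith [inv_pos.2 hy0, exp_pos (C * τ)]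
  have hgrowth : (y 0)⁻¹ + 1 ≤ exp (C * t) * ((y t)⁻¹ + 1) := by
    simpa using monotoneOn_exp_mul_inv_add_one (convex_Icc 0 T) hderiv hpos hineq h0T htT ht0
  have hden : B - 1 ≤ exp (-C * t) * ((y 0)⁻¹ + 1) - 1 := by
    have hexp : B⁻¹ ≤ exp (-C * t) := by
      rw [← exp_neg, neg_mul]
      exact exp_le_exp.2 <| neg_le_neg <|
        mul_le_mul_of_nonneg_left (htmin.trans (min_le_right _ _)) hC.le
    have : B⁻¹ * ((y 0)⁻¹ + 1) = B := by rw [add_comm, ← hB]; field_simp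
    nlinarith [inv_pos.2 hy0]
  have hfirst : y t ≤ 1 / (exp (-C * t) * ((y 0)⁻¹ + 1) - 1) := by
    have : exp (-C * t) * ((y 0)⁻¹ + 1) ≤ (y t)⁻¹ + 1 := by
      rwa [neg_mul, exp_neg, inv_mul_le_iff₀ (exp_pos _)]
    rw [le_one_div hyt (by linarith), one_div]
    linarith
  exact ⟨hfirst, hfirst.trans ((one_div_le_one_div_of_le (by linarith) hden).trans
    (one_div_sub_one_le_two_mul_mul hy0 (by linarith) hB))⟩

/-- Riccati-type comparison, Remark 2.11: if `y > 0` solves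
`y' ≤ C(y + y²)` on `[0,T]`, then on `[0, min(T, T̃)]` with
`T̃ = (1/(2C)) ln(1 + 1/y₀)` one has `y(t) ≤ 1/(e^{-Ct}(y₀⁻¹ + 1) - 1) ≤ 2 e^{CT̃} y₀`. -/
theorem riccati_comparison (C T : ℝ) (hC : 0 < C) (hT : 0 < T) (y y' : ℝ → ℝ)
    (hderiv : ∀ t ∈ Set.Icc (0 : ℝ) T, HasDerivAt y (y' t) t)
    (hcont : ContinuousOn y' (Set.Icc 0 T))
    (hpos : ∀ t ∈ Set.Icc (0 : ℝ) T, 0 < y t)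
    (hineq : ∀ t ∈ Set.Icc (0 : ℝ) T, y' t ≤ C * (y t + (y t) ^ 2)) :
    ∀ t ∈ Set.Icc (0 : ℝ) (min T ((1 / (2 * C)) * Real.log (1 + 1 / y 0))),
      y t ≤ 1 / (Real.exp (-C * t) * ((y 0)⁻¹ + 1) - 1) ∧
      y t ≤ 2 * Real.exp (C * ((1 / (2 * C)) * Real.log (1 + 1 / y 0))) * y 0 :=
  riccati_comparison_general C T hC y y' hderiv hpos hineq

end
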